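/- If a positive stochastic choice p on X is locally rationalizable at a set G with 1 < |G| < |X|, then G is a non-trivial weak category for p. -/
import Mathlib


open Finset
open scoped Classical

/-- `q` is a positive stochastic choice on the menus included in `D`. -/
def PosSCOn {Y : Type*} [DecidableEq Y] (D : Finset Y) (q : Y → Finset Y → ℝ) : Prop :=
  (∀ y (A : Finset Y), y ∉ A → q y A = 0) ∧
  ∀ A : Finset Y, A.Nonempty → A ⊆ D →
    (∑ y ∈ A, q y A) = 1 ∧ ∀ y ∈ A, 0 < q y A

/-- The class of index `i` in the partition induced by `π`. -/
def classOf {X I : Type*} [Fintype X] [DecidableEq I] (π : X → I) (i : I) : Finset X :=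
  Finset.univ.filter fun x => π x = i

/-- `p` is a stochastic choice with categorization w.r.t. the partition induced by `π`,
with components `ω` (choice among classes) and `σ` (choices within classes). -/
def IsSCC {X I : Type*} [Fintype X] [DecidableEq X] [Fintype I] [DecidableEq I]
    (p : X → Finset X → ℝ) (π : X → I) (ω : I → Finset I → ℝ)
    (σ : I → X → Finset X → ℝ) : Prop :=
  Function.Surjective π ∧
  PosSCOn Finset.univ ω ∧
  (∀ i, PosSCOn (classOf π i) (σ i)) ∧
  ∀ A : Finset X, A.Nonempty → ∀ a ∈ A,
    p a A = ω (π a) (A.image π) * σ (π a) a (A.filter fun x => π x = π a)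

/-- `p` is a stochastic choice with weak categorization w.r.t. `π`, with menu-dependent
weights `ω` over classes and within-class choices `σ`. -/
def IsSCWC {X I : Type*} [Fintype X] [DecidableEq X] [Fintype I] [DecidableEq I]
    (p : X → Finset X → ℝ) (π : X → I) (ω : Finset X → I → ℝ)
    (σ : I → X → Finset X → ℝ) : Prop :=
  Function.Surjective π ∧
  (∀ A : Finset X, A.Nonempty →
    (∀ i, 0 ≤ ω A i ∧ (ω A i = 0 ↔ i ∉ A.image π)) ∧
    (∑ i ∈ A.image π, ω A i) = 1) ∧
  (∀ i, PosSCOn (classOf π i) (σ i)) ∧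
  ∀ A : Finset X, A.Nonempty → ∀ a ∈ A,
    p a A = ω A (π a) * σ (π a) a (A.filter fun x => π x = π a)

/-- C-IND: external items do not alter choice probability ratios within `C`. -/
def CInd {X : Type*} [Fintype X] [DecidableEq X] (p : X → Finset X → ℝ)
    (C : Finset X) : Prop :=
  ∀ S ⊆ C, ∀ a ∈ S, ∀ b ∈ S, ∀ E ⊆ Cᶜ,
    p a S / p b S = p a (S ∪ E) / p b (S ∪ E)

/-- C-NEU: items of `C` are perfect substitutes from the point of view of external items. -/
def CNeu {X : Type*} [Fintype X] [DecidableEq X] (p : X → Finset X → ℝ)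
    (C : Finset X) : Prop :=
  ∀ E ⊆ Cᶜ, ∀ x ∈ E, ∀ S ⊆ C, S.Nonempty → p x (S ∪ E) = p x (C ∪ E)

def IsCategory {X : Type*} [Fintype X] [DecidableEq X] (p : X → Finset X → ℝ)
    (C : Finset X) : Prop :=
  CInd p C ∧ CNeu p C

def NonTrivialSet {X : Type*} [Fintype X] (C : Finset X) : Prop :=
  1 < C.card ∧ C.card < Fintype.card X

def IsPartition {X : Type*} [Fintype X] [DecidableEq X] (P : Finset (Finset X)) : Prop :=
  (∀ B ∈ P, B.Nonempty) ∧ ∀ x : X, ∃! B, B ∈ P ∧ x ∈ B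

def NonDegPart {X : Type*} [Fintype X] (P : Finset (Finset X)) : Prop :=
  1 < P.card ∧ P.card < Fintype.card X

/-- `p` is SCC w.r.t. the partition `P` of `X` (partition given as a set of blocks). -/
def IsSCCPart {X : Type*} [Fintype X] [DecidableEq X] (p : X → Finset X → ℝ)
    (P : Finset (Finset X)) : Prop :=
  IsPartition P ∧
  ∃ (π : X → Finset X) (ω : Finset X → Finset (Finset X) → ℝ)
    (σ : Finset X → X → Finset X → ℝ),
    (∀ x, π x ∈ P ∧ x ∈ π x) ∧
    PosSCOn P ω ∧
    (∀ B ∈ P, PosSCOn B (σ B)) ∧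
    ∀ A : Finset X, A.Nonempty → ∀ a ∈ A,
      p a A = ω (π a) (A.image π) * σ (π a) a (A.filter fun x => x ∈ π a)

/-- `p` is SCWC w.r.t. the partition `P` of `X`. -/
def IsSCWCPart {X : Type*} [Fintype X] [DecidableEq X] (p : X → Finset X → ℝ)
    (P : Finset (Finset X)) : Prop :=
  IsPartition P ∧
  ∃ (π : X → Finset X) (ω : Finset X → Finset X → ℝ)
    (σ : Finset X → X → Finset X → ℝ),
    (∀ x, π x ∈ P ∧ x ∈ π x) ∧
    (∀ A : Finset X, A.Nonempty →
      (∀ B, 0 ≤ ω A B ∧ (ω A B = 0 ↔ B ∉ A.image π)) ∧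
      (∑ B ∈ A.image π, ω A B) = 1) ∧
    (∀ B ∈ P, PosSCOn B (σ B)) ∧
    ∀ A : Finset X, A.Nonempty → ∀ a ∈ A,
      p a A = ω A (π a) * σ (π a) a (A.filter fun x => x ∈ π a)

/-- A deterministic choice function on menus. -/
def IsChoiceFun {Y : Type*} [DecidableEq Y] (c : Finset Y → Y) : Prop :=
  ∀ A : Finset Y, A.Nonempty → c A ∈ A

/-- A deterministic choice is resolvable w.r.t. the partition induced by `π`. -/
def Resolvable {X I : Type*} [Fintype X] [DecidableEq X] [DecidableEq I]
    (π : X → I) (c : Finset X → X) : Prop :=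
  ∃ (cI : Finset I → I) (cf : I → Finset X → X),
    IsChoiceFun cI ∧
    (∀ i, ∀ S : Finset X, S.Nonempty → S ⊆ classOf π i → cf i S ∈ S) ∧
    ∀ A : Finset X, A.Nonempty →
      c A = cf (cI (A.image π)) (A.filter fun x => π x = cI (A.image π))

/-- `q` admits a random utility representation on menus included in `D`:
a probability distribution over rankings (linear orders, encoded as bijections with `Fin n`)
such that the choice probability of `y` from `A` is the probability that `y` is ranked
above every other element of `A`. -/
def IsRUMOn {Y : Type*} [Fintype Y] [DecidableEq Y] (D : Finset Y)
    (q : Y → Finset Y → ℝ) : Prop :=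
  ∃ P : (Y ≃ Fin (Fintype.card Y)) → ℝ,
    (∀ L, 0 ≤ P L) ∧ (∑ L, P L) = 1 ∧
    ∀ A : Finset Y, A.Nonempty → A ⊆ D → ∀ y ∈ A,
      q y A = ∑ L ∈ Finset.univ.filter (fun L : Y ≃ Fin (Fintype.card Y) =>
        ∀ b ∈ A, b ≠ y → L b < L y), P L

/-- `p` is locally rationalizable at `G`. -/
def LocallyRationalizable {X : Type*} [Fintype X] [DecidableEq X]
    (p : X → Finset X → ℝ) (G : Finset X) : Prop :=
  ∃ q : (X ≃ Fin (Fintype.card X)) → ℝ,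
    (∀ L, 0 ≤ q L) ∧ (∑ L, q L) = 1 ∧
    ∀ x ∈ G, ∀ A : Finset X, A.Nonempty → x ∈ A →
      p x A = (∑ a ∈ A ∩ G, p a A) *
        ∑ L ∈ Finset.univ.filter (fun L : X ≃ Fin (Fintype.card X) =>
          ∀ b ∈ A ∩ G, b ≠ x → L b < L x), q L

/-- if `p` is locally rationalizable at `G` with `1 < |G| < |X|`,
then `G` is a non-trivial weak category. -/
theorem stmt19 {X : Type*} [Fintype X] [DecidableEq X]
    (p : X → Finset X → ℝ) (hp : PosSCOn Finset.univ p)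
    (G : Finset X) (hG : LocallyRationalizable p G)
    (h1 : 1 < G.card) (h2 : G.card < Fintype.card X) :
    NonTrivialSet G ∧ CInd p G := by
  refine ⟨⟨h1, h2⟩, ?_⟩
  obtain ⟨q, hq0, hq1, hrep⟩ := hG
  intro S hS a ha b hb E hE
  have hSG : S ∩ G = S := Finset.inter_eq_left.mpr hS
  have hEG : E ∩ G = ∅ := by
    rw [← Finset.disjoint_iff_inter_eq_empty]
    exact Finset.disjoint_left.mpr fun x hx hxG => Finset.mem_compl.mp (hE hx) hxG
  have hUG : (S ∪ E) ∩ G = S := by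
    rw [Finset.union_inter_distrib_right, hSG, hEG, Finset.union_empty]
  have hSne : S.Nonempty := ⟨a, ha⟩
  have hUne : (S ∪ E).Nonempty := ⟨a, Finset.mem_union_left _ ha⟩
  have haG : a ∈ G := hS ha
  have hbG : b ∈ G := hS hb
  have hsumS : (∑ y ∈ S, p y S) = 1 := (hp.2 S hSne (Finset.subset_univ _)).1
  have ha1 := hrep a haG S hSne ha
  have hb1 := hrep b hbG S hSne hb
  rw [hSG, hsumS, one_mul] at ha1 hb1
  have ha2 := hrep a haG (S ∪ E) hUne (Finset.mem_union_left _ ha)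
  have hb2 := hrep b hbG (S ∪ E) hUne (Finset.mem_union_left _ hb)
  rw [hUG] at ha2 hb2
  have hpa2 : 0 < p a (S ∪ E) :=
    (hp.2 (S ∪ E) hUne (Finset.subset_univ _)).2 a (Finset.mem_union_left _ ha)
  have hc : (∑ y ∈ S, p y (S ∪ E)) ≠ 0 := by
    intro h
    rw [h, zero_mul] at ha2
    exact hpa2.ne' ha2
  rw [ha1, hb1, ha2, hb2, mul_div_mul_left _ _ hc]
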